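/- arXiv:1308.0180 — 3 statements merged into one kernel-verified Lean document; each statement's English description precedes it below -/
import Mathlib

section
/- Let H be a digraph with no circular N, and fix an ordering p₁,…,p_m of V(H⁺) listing the strong components C₁,…,C_t in an order where each Cᵢ has no arcs to C_j with j < i. Suppose P = a,a₁,…,a', Q = b,b₁,…,b', R = b,c₁,…,c' are three congruent walks in H such that for every subscript i, the unordered pair {bᵢ,cᵢ} is k-allowed. If P and Q avoid each other, then P and R avoid each other. -/
namespace DigraphListHom

variable {V W : Type*}

/-- One step of a walk: forward if `dir = true`, backward otherwise. -/
def Step (H : V → V → Prop) (u v : V) (dir : Bool) : Prop :=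
  if dir then H u v else H v u

/-- `x` is a walk in `H` with direction pattern `d`. -/
def IsWalk (H : V → V → Prop) {n : ℕ} (d : Fin n → Bool) (x : Fin (n + 1) → V) : Prop :=
  ∀ i : Fin n, Step H (x i.castSucc) (x i.succ) (d i)

/-- `x_i y_{i+1}` is a faithful edge from `X` to `Y` at position `i`. -/
def FaithfulAt (H : V → V → Prop) {n : ℕ} (d : Fin n → Bool) (x y : Fin (n + 1) → V)
    (i : Fin n) : Prop :=
  Step H (x i.castSucc) (y i.succ) (d i)

/-- `X` avoids `Y`: there is no faithful edge from `X` to `Y`. -/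
def Avoids (H : V → V → Prop) {n : ℕ} (d : Fin n → Bool) (x y : Fin (n + 1) → V) : Prop :=
  ∀ i, ¬ FaithfulAt H d x y i

/-- `Z` protects `Y` from `X`: faithful edges `x_i z_{i+1}` and `z_j y_{j+1}` imply `j ≤ i`. -/
def Protects (H : V → V → Prop) {n : ℕ} (d : Fin n → Bool) (x y z : Fin (n + 1) → V) : Prop :=
  ∀ i j : Fin n, FaithfulAt H d x z i → FaithfulAt H d z y j → (j : ℕ) ≤ (i : ℕ)

/-- `H` contains a circular `N`: congruent walks `X` from `x` to `x`, `Y` from `y` to `y`,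
`Z` from `y` to `x`, with `X` avoiding `Y` and `Z` protecting `Y` from `X`. -/
def CircularN (H : V → V → Prop) : Prop :=
  ∃ n : ℕ, 0 < n ∧ ∃ (d : Fin n → Bool) (x y z : Fin (n + 1) → V),
    IsWalk H d x ∧ IsWalk H d y ∧ IsWalk H d z ∧
    x (Fin.last n) = x 0 ∧ y (Fin.last n) = y 0 ∧
    z 0 = y 0 ∧ z (Fin.last n) = x 0 ∧
    Avoids H d x y ∧ Protects H d x y z

/-- Arc relation of the pair digraph `H⁺` (on ambient pairs). -/
def PairArc (H : V → V → Prop) (p q : V × V) : Prop :=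
  (H p.1 q.1 ∧ H p.2 q.2 ∧ ¬ H p.1 q.2) ∨ (H q.1 p.1 ∧ H q.2 p.2 ∧ ¬ H q.2 p.1)

/-- Arc relation of `H⁺` restricted to genuine vertices (pairs of distinct vertices). -/
def PairArcD (H : V → V → Prop) (p q : V × V) : Prop :=
  p.1 ≠ p.2 ∧ q.1 ≠ q.2 ∧ PairArc H p q

/-- Reachability in `H⁺`. -/
def PairReach (H : V → V → Prop) : V × V → V × V → Prop :=
  Relation.ReflTransGen (PairArcD H)

/-- Mutual reachability in `H⁺` (same strong component). -/
def SameSCC (H : V → V → Prop) (p q : V × V) : Prop :=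
  PairReach H p q ∧ PairReach H q p

/-- `C` is a strong component of the digraph with arc relation `R`. -/
def IsStrongComponent {α : Type*} (R : α → α → Prop) (C : Set α) : Prop :=
  ∃ a, C = {b | Relation.ReflTransGen R a b ∧ Relation.ReflTransGen R b a}

/-- There is a directed path with `m` vertices in the condensation of `H⁺`
ending at the strong component of `p`. -/
def CondChain (H : V → V → Prop) (p : V × V) (m : ℕ) : Prop :=
  ∃ r : Fin m → V × V,
    (∀ i, (r i).1 ≠ (r i).2) ∧
    (∀ i j : Fin m, i < j → PairReach H (r i) (r j) ∧ ¬ PairReach H (r j) (r i)) ∧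
    (∀ i, PairReach H (r i) p) ∧
    (∀ h : 0 < m, PairReach H p (r ⟨m - 1, Nat.sub_lt h Nat.one_pos⟩))

/-- `μ(p)`: the maximum number of vertices of a directed path in the condensation of `H⁺`
ending at the strong component of `p` (with `μ(x,x) = 0`). -/
noncomputable def mu (H : V → V → Prop) (p : V × V) : ℕ :=
  sSup {m | CondChain H p m}

/-- The unordered pair `{u, v}` is `k`-allowed with respect to the ordering `ord` of `V(H⁺)`:
neither `(u,v)` nor `(v,u)` is `k`-processed (i.e. has position `> k`). -/
def KAllowed (ord : V × V → ℕ) (k : ℕ) (u v : V) : Prop :=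
  u = v ∨ (ord (u, v) ≤ k ∧ ord (v, u) ≤ k)

/-- `ord` is an ordering of the vertices of `H⁺` listing the strong components
consecutively, in an order in which each component is a sink among the later ones. -/
def GoodOrd (H : V → V → Prop) (ord : V × V → ℕ) : Prop :=
  (∀ p q : V × V, p.1 ≠ p.2 → q.1 ≠ q.2 → ord p = ord q → p = q) ∧
  (∀ p q : V × V, p.1 ≠ p.2 → q.1 ≠ q.2 → PairReach H p q → ¬ PairReach H q p →
    ord p < ord q) ∧
  (∀ p q r : V × V, p.1 ≠ p.2 → q.1 ≠ q.2 → r.1 ≠ r.2 →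
    SameSCC H p q → ord p ≤ ord r → ord r ≤ ord q → SameSCC H p r)

/-- `f` is an `L`-homomorphism of `G` to `H`. -/
def IsLHom (H : V → V → Prop) (G : W → W → Prop) (L : W → Set V) (f : W → V) : Prop :=
  (∀ u v, G u v → H (f u) (f v)) ∧ ∀ w, f w ∈ L w

/-- Arc relation of the triple digraph `Tr(G,L)`. -/
def TrArc (H : V → V → Prop) (G : W → W → Prop) (L : W → Set V)
    (p q : W × V × V) : Prop :=
  p.2.1 ∈ L p.1 ∧ p.2.2 ∈ L p.1 ∧ q.2.1 ∈ L q.1 ∧ q.2.2 ∈ L q.1 ∧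
  G p.1 q.1 ∧ H p.2.1 q.2.1 ∧ H p.2.2 q.2.2 ∧ ¬ H p.2.1 q.2.2 ∧ ¬ H p.2.2 q.2.1

/-- Symmetrization of the triple-digraph arc relation (for weak connectivity). -/
def TrSym (H : V → V → Prop) (G : W → W → Prop) (L : W → Set V)
    (p q : W × V × V) : Prop :=
  TrArc H G L p q ∨ TrArc H G L q p

/-- Weak connectivity in the triple digraph `Tr(G,L)`. -/
def WConn (H : V → V → Prop) (G : W → W → Prop) (L : W → Set V) :
    W × V × V → W × V × V → Prop :=
  Relation.ReflTransGen (TrSym H G L)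

/-- `f` is a ternary polymorphism of `H`. -/
def Polymorphism3 (H : V → V → Prop) (f : V → V → V → V) : Prop :=
  ∀ a a' b b' c c', H a a' → H b b' → H c c' → H (f a b c) (f a' b' c')

/-- `f` is conservative. -/
def Conservative3 (f : V → V → V → V) : Prop :=
  ∀ a b c, f a b c = a ∨ f a b c = b ∨ f a b c = c

/-- `f 1, …, f k` satisfy the Hagemann–Mitschke identities. -/
def HMChain (f : ℕ → V → V → V → V) (k : ℕ) : Prop :=
  (∀ x y, f 1 x y y = x) ∧
  (∀ i, 1 ≤ i → i < k → ∀ x y, f i x x y = f (i + 1) x y y) ∧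
  (∀ x y, f k x x y = y)

/-- `H` contains a pair of independent edges. -/
def IndependentEdges (H : V → V → Prop) : Prop :=
  ∃ a b c d, H a b ∧ H c d ∧ ¬ H a d ∧ ¬ H c b

/-- `H` contains a bicycle. -/
def Bicycle (H : V → V → Prop) : Prop :=
  ∃ n : ℕ, 0 < n ∧ ∃ x y : Fin (n + 1) → V,
    x (Fin.last n) = x 0 ∧ y (Fin.last n) = y 0 ∧
    ∀ i : Fin n, H (x i.castSucc) (x i.succ) ∧ H (y i.castSucc) (y i.succ) ∧
      ¬ H (x i.castSucc) (y i.succ) ∧ H (y i.castSucc) (x i.succ)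

/-- `a` is an `i`-distinguisher of `a, b, c`. -/
def IDist (H : V → V → Prop) (i : ℕ) (a b c : V) : Prop :=
  ∃ (n : ℕ) (d : Fin n → Bool) (X Y Z : Fin (n + 1) → V),
    IsWalk H d X ∧ IsWalk H d Y ∧ IsWalk H d Z ∧
    X 0 = a ∧ Y 0 = b ∧ Z 0 = c ∧
    Y (Fin.last n) = Z (Fin.last n) ∧
    i ≤ mu H (X (Fin.last n), Y (Fin.last n)) ∧
    Avoids H d Y X ∧ Avoids H d Z X

/-! Suppose `P` and `R` are joined by a faithful edge. Splicing `P`, `Q`, `R` at that edge gives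
congruent walks `X`, `Y`, `Z` with `X` avoiding `Y` and `Z` protecting `Y` from `X`, starting at
`(a, b)` and ending at a pair `(R j, Q j)`. Since `X` avoids `Y`, the pair walk `(X, Y)` is a path
in `H⁺` from `(a, b)`; as `{Q j, R j}` is `k`-allowed, its end does not come after `(a, b)` in the
ordering, so it lies in the strong component of `(a, b)`. A path back to `(a, b)`, followed by `X`
and `Y` on their coordinates and by `Z` along `X`, closes the three walks into a circular `N`. -/

section NatWalks

open Function

variable {H : V → V → Prop}

lemma step_not {u v : V} {c : Bool} : Step H u v (!c) ↔ Step H v u c := by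
  cases c <;> rfl

lemma pairArcD_of_step {u₁ u₂ v₁ v₂ : V} (hu : u₁ ≠ u₂) (hv : v₁ ≠ v₂) {c : Bool}
    (h₁ : Step H u₁ v₁ c) (h₂ : Step H u₂ v₂ c) (h₃ : ¬ Step H u₁ v₂ c) :
    PairArcD H (u₁, u₂) (v₁, v₂) := by
  refine ⟨hu, hv, ?_⟩
  cases c
  · exact Or.inr ⟨h₁, h₂, h₃⟩
  · exact Or.inl ⟨h₁, h₂, h₃⟩

lemma exists_step_of_pairArcD {p q : V × V} (h : PairArcD H p q) :
    ∃ c, Step H p.1 q.1 c ∧ Step H p.2 q.2 c ∧ ¬ Step H p.1 q.2 c := by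
  rcases h.2.2 with h | h
  · exact ⟨true, h⟩
  · exact ⟨false, h⟩

/- `ℕ`-indexed walks of length `L`: only the vertices `x 0, …, x L` and the directions
`e 0, …, e (L - 1)` matter, so a walk is extended by one step with `Function.update`. -/

def IsWalkOn (H : V → V → Prop) (L : ℕ) (e : ℕ → Bool) (x : ℕ → V) : Prop :=
  ∀ j < L, Step H (x j) (x (j + 1)) (e j)

def AvoidsOn (H : V → V → Prop) (L : ℕ) (e : ℕ → Bool) (x y : ℕ → V) : Prop :=
  ∀ j < L, ¬ Step H (x j) (y (j + 1)) (e j)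

def ProtectsOn (H : V → V → Prop) (L : ℕ) (e : ℕ → Bool) (x y z : ℕ → V) : Prop :=
  ∀ i < L, ∀ j < L, Step H (x i) (z (i + 1)) (e i) → Step H (z j) (y (j + 1)) (e j) → j ≤ i

variable {L L' : ℕ} {e : ℕ → Bool} {x y z : ℕ → V}

lemma IsWalkOn.mono (h : IsWalkOn H L' e x) (hL : L ≤ L') : IsWalkOn H L e x :=
  fun j hj => h j (by omega)

lemma AvoidsOn.mono (h : AvoidsOn H L' e x y) (hL : L ≤ L') : AvoidsOn H L e x y :=
  fun j hj => h j (by omega)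

lemma AvoidsOn.ne (h : AvoidsOn H L e x y) (hy : IsWalkOn H L e y) {j : ℕ} (hj : j < L) :
    x j ≠ y j :=
  fun hxy => h j hj (hxy ▸ hy j hj)

lemma protectsOn_of_le (I : ℕ) (hxz : ∀ j < L, Step H (x j) (z (j + 1)) (e j) → I ≤ j)
    (hzy : ∀ j < L, Step H (z j) (y (j + 1)) (e j) → j ≤ I) : ProtectsOn H L e x y z :=
  fun i hi j hj hi' hj' => (hzy j hj hj').trans (hxz i hi hi')

lemma IsWalkOn.update (h : IsWalkOn H L e x) {v : V} {c : Bool} (hv : Step H (x L) v c) :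
    IsWalkOn H (L + 1) (update e L c) (update x (L + 1) v) := by
  intro j hj
  rcases Nat.lt_succ_iff_lt_or_eq.mp hj with hj | rfl
  · simpa [update_apply, hj.ne, show j ≠ L + 1 by omega] using h j hj
  · simpa using hv

lemma AvoidsOn.update (h : AvoidsOn H L e x y) {u w : V} {c : Bool}
    (hw : ¬ Step H (x L) w c) :
    AvoidsOn H (L + 1) (update e L c) (update x (L + 1) u) (update y (L + 1) w) := by
  intro j hj
  rcases Nat.lt_succ_iff_lt_or_eq.mp hj with hj | rfl
  · simpa [update_apply, hj.ne, show j ≠ L + 1 by omega] using h j hj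
  · simpa using hw

lemma ProtectsOn.update (h : ProtectsOn H L e x y z) {u v w : V} {c : Bool}
    (hw : ¬ Step H (z L) w c) :
    ProtectsOn H (L + 1) (update e L c) (update x (L + 1) u) (update y (L + 1) w)
      (update z (L + 1) v) := by
  intro i hi j hj hxz hzy
  rcases Nat.lt_succ_iff_lt_or_eq.mp hj with hj | rfl
  · rcases Nat.lt_succ_iff_lt_or_eq.mp hi with hi | rfl
    · simp only [update_apply, hi.ne, hj.ne, show i ≠ L + 1 by omega,
        show j ≠ L + 1 by omega, Nat.add_right_cancel_iff, if_false] at hxz hzy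
      exact h i hi j hj hxz hzy
    · exact hj.le
  · exact (hw (by simpa using hzy)).elim

lemma pairReach_of_avoidsOn (hx : IsWalkOn H L e x) (hy : IsWalkOn H L e y)
    (hxy : AvoidsOn H L e x y) (hL : x L ≠ y L) : PairReach H (x 0, y 0) (x L, y L) := by
  induction L with
  | zero => exact .refl
  | succ L ih =>
    have hne := hxy.ne hy L.lt_succ_self
    exact (ih (hx.mono L.le_succ) (hy.mono L.le_succ) (hxy.mono L.le_succ) hne).tail
      (pairArcD_of_step hne hL (hx L L.lt_succ_self) (hy L L.lt_succ_self)
        (hxy L L.lt_succ_self))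

lemma circularN_of_isWalkOn (hL : 0 < L) (hx : IsWalkOn H L e x) (hy : IsWalkOn H L e y)
    (hz : IsWalkOn H L e z) (hxL : x L = x 0) (hyL : y L = y 0) (hz0 : z 0 = y 0)
    (hzL : z L = x 0) (hxy : AvoidsOn H L e x y) (hxyz : ProtectsOn H L e x y z) :
    CircularN H :=
  ⟨L, hL, fun i => e i, fun i => x i, fun i => y i, fun i => z i, fun i => hx i i.2,
    fun i => hy i i.2, fun i => hz i i.2, hxL, hyL, hz0, hzL, fun i => hxy i i.2,
    fun i j => hxyz i i.2 j j.2⟩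

lemma circularN_of_pairReach (hL : 0 < L) (hx : IsWalkOn H L e x) (hy : IsWalkOn H L e y)
    (hz : IsWalkOn H L e z) (hz0 : z 0 = y 0) (hzL : z L = x L) (hxy : AvoidsOn H L e x y)
    (hxyz : ProtectsOn H L e x y z) (hreach : PairReach H (x L, y L) (x 0, y 0)) :
    CircularN H := by
  generalize hp : (x L, y L) = p at hreach
  generalize hq : (x 0, y 0) = q at hreach
  induction hreach using Relation.ReflTransGen.head_induction_on generalizing L e x y z with
  | refl =>
    obtain ⟨hxL, hyL⟩ := Prod.ext_iff.mp (hp.trans hq.symm)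
    exact circularN_of_isWalkOn hL hx hy hz hxL hyL hz0 (hzL.trans hxL) hxy hxyz
  | head hpp' _ ih =>
    subst hp
    obtain ⟨c, h₁, h₂, h₃⟩ := exists_step_of_pairArcD hpp'
    exact ih (by omega) (hx.update h₁) (hy.update h₂) (hz.update (hzL ▸ h₁))
      (by simpa using hz0) (by simp) (hxy.update h₃) (hxyz.update (hzL ▸ h₃)) (by simp)
      (by simpa using hq)

lemma GoodOrd.ord_lt_of_protectsOn {ord : V × V → ℕ} (hord : GoodOrd H ord)
    (hH : ¬ CircularN H) (hL : 0 < L) (hx : IsWalkOn H L e x) (hy : IsWalkOn H L e y)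
    (hz : IsWalkOn H L e z) (hz0 : z 0 = y 0) (hzL : z L = x L) (hxy : AvoidsOn H L e x y)
    (hxyz : ProtectsOn H L e x y z) (hne : x L ≠ y L) :
    ord (x 0, y 0) < ord (x L, y L) := by
  have hreach := pairReach_of_avoidsOn hx hy hxy hne
  by_cases hback : PairReach H (x L, y L) (x 0, y 0)
  · exact (hH (circularN_of_pairReach hL hx hy hz hz0 hzL hxy hxyz hback)).elim
  · exact hord.2.1 _ _ (hxy.ne hy hL) hne hreach hback

end NatWalks

section Allowed

open Function

variable {H : V → V → Prop} {ord : V × V → ℕ} {n : ℕ} {e : ℕ → Bool} {P Q R : ℕ → V}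

/-- Minimality of the first faithful edge `P i → R (i + 1)` is what makes `R` protect `Q` from
the spliced walk `P 0, …, P i, R (i + 1)`. -/
theorem avoidsOn_of_kAllowed (hH : ¬ CircularN H) (hord : GoodOrd H ord)
    (hP : IsWalkOn H n e P) (hQ : IsWalkOn H n e Q) (hR : IsWalkOn H n e R)
    (hR0 : R 0 = Q 0) (hallow : ∀ j ≤ n, KAllowed ord (ord (P 0, Q 0)) (Q j) (R j))
    (hPQ : AvoidsOn H n e P Q) : AvoidsOn H n e P R := by
  classical
  by_contra hPR
  have hex : ∃ i, i < n ∧ Step H (P i) (R (i + 1)) (e i) := by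
    simpa [AvoidsOn] using hPR
  obtain ⟨hi, hstep⟩ := Nat.find_spec hex
  set i := Nat.find hex
  have hmin : ∀ j < i, ¬ Step H (P j) (R (j + 1)) (e j) :=
    fun j hj h => Nat.find_min hex hj ⟨by omega, h⟩
  have hne : R (i + 1) ≠ Q (i + 1) := fun h => hPQ i hi (h ▸ hstep)
  have hX : IsWalkOn H (i + 1) e (update P (i + 1) (R (i + 1))) := by
    simpa only [update_eq_self] using (hP.mono hi.le).update hstep
  have hXQ : AvoidsOn H (i + 1) e (update P (i + 1) (R (i + 1))) Q := by
    simpa only [update_eq_self] using (hPQ.mono hi.le).update (w := Q (i + 1)) (hPQ i hi)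
  have hprot : ProtectsOn H (i + 1) e (update P (i + 1) (R (i + 1))) Q R := by
    refine protectsOn_of_le i (fun j hj h => ?_) (fun j hj _ => by omega)
    by_contra hji
    simp only [update_of_ne (show j ≠ i + 1 by omega)] at h
    exact hmin j (by omega) h
  have hlt := hord.ord_lt_of_protectsOn hH (by omega) hX (hQ.mono hi) (hR.mono hi)
    hR0 (by simp) hXQ hprot (by simpa using hne)
  simp only [update_self, update_of_ne (show 0 ≠ i + 1 by omega)] at hlt
  have := ((hallow (i + 1) hi).resolve_left hne.symm).2
  omega

/-- A faithful edge `R i → P (i + 1)`, traversed backwards, lets the pair walk `(P, Q)` step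
from `(P (i + 1), Q (i + 1))` back to `(R i, Q i)`. -/
theorem avoidsOn_symm_of_kAllowed (hH : ¬ CircularN H) (hord : GoodOrd H ord)
    (hP : IsWalkOn H n e P) (hQ : IsWalkOn H n e Q) (hR : IsWalkOn H n e R)
    (hR0 : R 0 = Q 0) (hallow : ∀ j ≤ n, KAllowed ord (ord (P 0, Q 0)) (Q j) (R j))
    (hPQ : AvoidsOn H n e P Q) (hQP : AvoidsOn H n e Q P) (hPR : AvoidsOn H n e P R) :
    AvoidsOn H n e R P := by
  intro i hi hstep
  have hne : Q i ≠ R i := fun h => hQP i hi (h ▸ hstep)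
  have hX := (hP.mono hi).update (v := R i) (step_not.mpr hstep)
  have hY := (hQ.mono hi).update (v := Q i) (step_not.mpr (hQ i hi))
  have hZ : IsWalkOn H (i + 1) e (update R (i + 1) (P (i + 1))) := by
    simpa only [update_eq_self] using (hR.mono hi.le).update hstep
  have hZ' := hZ.update (v := R i) (c := !e i) (by simpa using step_not.mpr hstep)
  have hXY := (hPQ.mono hi).update (u := R i) (w := Q i) (fun h => hQP i hi (step_not.mp h))
  have hprot : ProtectsOn H (i + 2) (update e (i + 1) (!e i)) (update P (i + 2) (R i))
      (update Q (i + 2) (Q i)) (update (update R (i + 1) (P (i + 1))) (i + 2) (R i)) := by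
    refine protectsOn_of_le i (fun j hj h => ?_) (fun j hj h => ?_)
    · by_contra hji
      simp only [update_of_ne (show j ≠ i + 1 by omega), update_of_ne (show j ≠ i + 2 by omega),
        update_of_ne (show j + 1 ≠ i + 1 by omega),
        update_of_ne (show j + 1 ≠ i + 2 by omega)] at h
      exact hPR j (by omega) h
    · by_contra hji
      obtain rfl : j = i + 1 := by omega
      simp only [update_self, update_of_ne (show i + 1 ≠ i + 2 by omega)] at h
      exact hQP i hi (step_not.mp h)
  have hlt := hord.ord_lt_of_protectsOn hH (by omega) hX hY hZ' (by simp [hR0])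
    (by simp) hXY hprot (by simpa using hne.symm)
  simp only [update_self, update_of_ne (show 0 ≠ i + 2 by omega)] at hlt
  have := ((hallow i hi.le).resolve_left hne).2
  omega

end Allowed

section FinToNat

variable {H : V → V → Prop} {n : ℕ} {d : Fin n → Bool} {x y : Fin (n + 1) → V}

def natSeq (x : Fin (n + 1) → V) : ℕ → V := fun j => x (Fin.clamp j n)

/-- The direction `true` beyond position `n` is arbitrary. -/
def natDir (d : Fin n → Bool) : ℕ → Bool := fun j => if h : j < n then d ⟨j, h⟩ else true

lemma natSeq_zero : natSeq x 0 = x 0 := by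
  simp [natSeq, Fin.clamp]

lemma faithfulAt_iff_step (i : Fin n) :
    FaithfulAt H d x y i ↔ Step H (natSeq x i) (natSeq y (i + 1)) (natDir d i) := by
  have h₁ : Fin.clamp i n = i.castSucc := Fin.ext (Nat.min_eq_left i.2.le)
  have h₂ : Fin.clamp (i + 1) n = i.succ := Fin.ext (Nat.min_eq_left i.2)
  simp [FaithfulAt, natSeq, natDir, h₁, h₂]

lemma IsWalk.isWalkOn (h : IsWalk H d x) : IsWalkOn H n (natDir d) (natSeq x) :=
  fun j hj => (faithfulAt_iff_step ⟨j, hj⟩).mp (h _)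

lemma avoids_iff_avoidsOn : Avoids H d x y ↔ AvoidsOn H n (natDir d) (natSeq x) (natSeq y) :=
  ⟨fun h j hj => (faithfulAt_iff_step ⟨j, hj⟩).not.mp (h _),
    fun h i => (faithfulAt_iff_step i).not.mpr (h i i.2)⟩

end FinToNat

theorem statement5_general (H : V → V → Prop) (hH : ¬ CircularN H)
    (ord : V × V → ℕ) (hord : GoodOrd H ord)
    (k : ℕ) (a b : V) (hk : ord (a, b) = k)
    {n : ℕ} (d : Fin n → Bool) (P Q R : Fin (n + 1) → V)
    (hP : IsWalk H d P) (hQ : IsWalk H d Q) (hR : IsWalk H d R)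
    (hP0 : P 0 = a) (hQ0 : Q 0 = b) (hR0 : R 0 = b)
    (hallow : ∀ i, KAllowed ord k (Q i) (R i))
    (hPQ : Avoids H d P Q) (hQP : Avoids H d Q P) :
    Avoids H d P R ∧ Avoids H d R P := by
  rw [avoids_iff_avoidsOn] at hPQ hQP ⊢
  rw [avoids_iff_avoidsOn]
  have hR0' : natSeq R 0 = natSeq Q 0 := by rw [natSeq_zero, natSeq_zero, hR0, hQ0]
  have hallow' : ∀ j ≤ n, KAllowed ord (ord (natSeq P 0, natSeq Q 0)) (natSeq Q j)
      (natSeq R j) := by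
    rw [natSeq_zero, natSeq_zero, hP0, hQ0, hk]
    exact fun j _ => hallow _
  have hPR := avoidsOn_of_kAllowed hH hord hP.isWalkOn hQ.isWalkOn hR.isWalkOn hR0' hallow' hPQ
  exact ⟨hPR, avoidsOn_symm_of_kAllowed hH hord hP.isWalkOn hQ.isWalkOn hR.isWalkOn hR0'
    hallow' hPQ hQP hPR⟩

/-- Lemma 4.1 ("Lemma new"). -/
theorem statement5 (H : V → V → Prop) (hH : ¬ CircularN H)
    (ord : V × V → ℕ) (hord : GoodOrd H ord)
    (k : ℕ) (a b : V) (hab : a ≠ b) (hk : ord (a, b) = k)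
    {n : ℕ} (d : Fin n → Bool) (P Q R : Fin (n + 1) → V)
    (hP : IsWalk H d P) (hQ : IsWalk H d Q) (hR : IsWalk H d R)
    (hP0 : P 0 = a) (hQ0 : Q 0 = b) (hR0 : R 0 = b)
    (hallow : ∀ i, KAllowed ord k (Q i) (R i))
    (hPQ : Avoids H d P Q) (hQP : Avoids H d Q P) :
    Avoids H d P R ∧ Avoids H d R P :=
  statement5_general H hH ord hord k a b hk d P Q R hP hQ hR hP0 hQ0 hR0 hallow hPQ hQP

end DigraphListHom
end

section
/- Let H be a digraph with no circular N and let Tr(G,L) be the triple digraph of an instance (G,L) of LHOM(H). If (x',a',b') is reachable from (x,a,b) in Tr(G,L), then any L-homomorphism f of G to H with f(x) = a satisfies f(x') ≠ b'. -/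
/-!
Read a walk in `Tr(G,L)` from `(x,a,b)` to `(x',a',b')` as two walks `A`, `B` in `H` with
independent edges at each step, and let `Z` be `f` along its `G`-coordinate, a walk from
`A 0 = a`; suppose `Z n = B n`. Walks `X`, `Y`, `Z` with `X` avoiding `Y`, `Z` running from `Y 0`
to `X n` and `(X n, Y n)` returning to `(X 0, Y 0)` in `H⁺` close up to a circular `N` unless `Z`
crosses from `X` to `Y`: is entered from `X` and later left towards `Y`. As `(A,B)` and `(B,A)`
run backwards in `H⁺`, `Z` crosses from `B` to `A`. At a narrowest crossing between `A` and `B`,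
rerouting shows that `Z` is crossed in both directions at the same times `i < j`. Switching `A`
and `B` to `Z` at `i` then gives walks along `B` whose end pair `(Z j, B j)` returns to `(a,b)`
in `H⁺`, being reachable from `(a,b)` and `k`-allowed for `k = ord (a,b)`; their forced crossing
is narrower.
-/

namespace DigraphListHom

variable {V W : Type*}

theorem _root_.Relation.ReflTransGen.exists_seq {α : Type*} {r : α → α → Prop} {a b : α}
    (h : Relation.ReflTransGen r a b) :
    ∃ (n : ℕ) (F : ℕ → α), F 0 = a ∧ F n = b ∧ ∀ t < n, r (F t) (F (t + 1)) := by
  induction h using Relation.ReflTransGen.head_induction_on with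
  | refl => exact ⟨0, fun _ => b, rfl, rfl, by simp⟩
  | head hac _ ih =>
    obtain ⟨n, F, hF0, hFn, hF⟩ := ih
    refine ⟨n + 1, fun | 0 => _ | t + 1 => F t, rfl, hFn, ?_⟩
    rintro (_ | t) ht
    · simpa [hF0] using hac
    · exact hF t (by omega)

variable {H : V → V → Prop}

section Sequences

def StepAt (H : V → V → Prop) (d : ℕ → Bool) (X Y : ℕ → V) (t : ℕ) : Prop :=
  Step H (X t) (Y (t + 1)) (d t)

def seqAppend {α : Type*} (n : ℕ) (X U : ℕ → α) : ℕ → α :=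
  fun t => if t < n then X t else U (t - n)

variable {α : Type*} {n t : ℕ}

lemma seqAppend_of_lt {X U : ℕ → α} (ht : t < n) : seqAppend n X U t = X t := if_pos ht

lemma seqAppend_of_le {X U : ℕ → α} (ht : n ≤ t) : seqAppend n X U t = U (t - n) :=
  if_neg (by omega)

lemma stepAt_seqAppend_of_lt {d e : ℕ → Bool} {X Y U T : ℕ → V} (hY : Y n = T 0) (ht : t < n) :
    StepAt H (seqAppend n d e) (seqAppend n X U) (seqAppend n Y T) t ↔ StepAt H d X Y t := by
  unfold StepAt
  rw [seqAppend_of_lt ht, seqAppend_of_lt ht]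
  rcases (Nat.succ_le_of_lt ht).lt_or_eq with h | h
  · rw [seqAppend_of_lt h]
  · obtain rfl := h
    rw [seqAppend_of_le le_rfl, Nat.sub_self, ← hY]

lemma stepAt_seqAppend_of_le {d e : ℕ → Bool} {X Y U T : ℕ → V} (ht : n ≤ t) :
    StepAt H (seqAppend n d e) (seqAppend n X U) (seqAppend n Y T) t ↔
      StepAt H e U T (t - n) := by
  unfold StepAt
  rw [seqAppend_of_le ht, seqAppend_of_le ht, seqAppend_of_le (by omega), Nat.sub_add_comm ht]

lemma circularN_of_seq {N : ℕ} (hN : 0 < N) (D : ℕ → Bool) (X Y Z : ℕ → V)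
    (hwalk : ∀ t < N, StepAt H D X X t ∧ StepAt H D Y Y t ∧ StepAt H D Z Z t)
    (hX : X N = X 0) (hY : Y N = Y 0) (hZ0 : Z 0 = Y 0) (hZN : Z N = X 0)
    (havoid : ∀ t < N, ¬ StepAt H D X Y t)
    (hprotect : ∀ i < N, ∀ j < N, StepAt H D X Z i → StepAt H D Z Y j → j ≤ i) :
    CircularN H := by
  refine ⟨N, hN, fun i => D i, fun i => X i, fun i => Y i, fun i => Z i,
    fun i => (hwalk i i.isLt).1, fun i => (hwalk i i.isLt).2.1, fun i => (hwalk i i.isLt).2.2,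
    hX, hY, hZ0, hZN, fun i => havoid i i.isLt,
    fun i j => hprotect i i.isLt j j.isLt⟩

end Sequences

def ForwardWalk (H : V → V → Prop) (n : ℕ) (X : ℕ → V) : Prop :=
  ∀ t < n, H (X t) (X (t + 1))

def ForwardAvoids (H : V → V → Prop) (n : ℕ) (X Y : ℕ → V) : Prop :=
  ∀ t < n, ¬ H (X t) (Y (t + 1))

/-- A crossing of `Z` from `X` to `Y` is exactly a violation of `Protects H d X Y Z`. -/
def IsCrossing (H : V → V → Prop) (X Z Y : ℕ → V) (i j : ℕ) : Prop :=
  i < j ∧ H (X i) (Z (i + 1)) ∧ H (Z j) (Y (j + 1))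

lemma PairArc.exists_step {p q : V × V} (h : PairArc H p q) :
    ∃ d, Step H p.1 q.1 d ∧ Step H p.2 q.2 d ∧ ¬ Step H p.1 q.2 d := by
  rcases h with h | h
  exacts [⟨true, h⟩, ⟨false, h⟩]

lemma PairReach.exists_seq {p q : V × V} (h : PairReach H p q) :
    ∃ (m : ℕ) (e : ℕ → Bool) (U T : ℕ → V), U 0 = p.1 ∧ T 0 = p.2 ∧ U m = q.1 ∧ T m = q.2 ∧
      ∀ t < m, StepAt H e U U t ∧ StepAt H e T T t ∧ ¬ StepAt H e U T t := by
  obtain ⟨m, F, hF0, hFm, hF⟩ := Relation.ReflTransGen.exists_seq h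
  have hstep : ∀ t, ∃ d, t < m → Step H (F t).1 (F (t + 1)).1 d ∧
      Step H (F t).2 (F (t + 1)).2 d ∧ ¬ Step H (F t).1 (F (t + 1)).2 d := fun t =>
    if ht : t < m then ((hF t ht).2.2.exists_step).imp fun _ hd _ => hd
    else ⟨true, fun h => absurd h ht⟩
  choose e he using hstep
  exact ⟨m, e, fun t => (F t).1, fun t => (F t).2, congrArg Prod.fst hF0,
    congrArg Prod.snd hF0, congrArg Prod.fst hFm, congrArg Prod.snd hFm, he⟩

/-- Otherwise `X`, `Y`, `Z` followed by the return path in `H⁺` form a circular `N`. -/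
theorem exists_isCrossing (hH : ¬ CircularN H) {n : ℕ} (hn : 0 < n) {X Y Z : ℕ → V}
    (hX : ForwardWalk H n X) (hY : ForwardWalk H n Y) (hZ : ForwardWalk H n Z)
    (hZ0 : Z 0 = Y 0) (hZn : Z n = X n) (hXY : ForwardAvoids H n X Y)
    (hret : PairReach H (X n, Y n) (X 0, Y 0)) :
    ∃ i j, j < n ∧ IsCrossing H X Z Y i j := by
  by_contra! hcross
  obtain ⟨m, e, U, T, hU0, hT0, hUm, hTm, hUT⟩ := hret.exists_seq
  have hXU : X n = U 0 := hU0.symm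
  have hYT : Y n = T 0 := hT0.symm
  have hZU : Z n = U 0 := hZn.trans hXU
  have last {S R : ℕ → V} : seqAppend n S R (n + m) = R m := by
    rw [seqAppend_of_le (Nat.le_add_right n m), Nat.add_sub_cancel_left]
  have first {S R : ℕ → V} : seqAppend n S R 0 = S 0 := seqAppend_of_lt hn
  refine hH (circularN_of_seq (N := n + m) (by omega) (seqAppend n (fun _ => true) e)
    (seqAppend n X U) (seqAppend n Y T) (seqAppend n Z U) ?_ ?_ ?_ ?_ ?_ ?_ ?_)
  · intro t ht
    rcases lt_or_ge t n with h | h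
    · rw [stepAt_seqAppend_of_lt hXU h, stepAt_seqAppend_of_lt hYT h,
        stepAt_seqAppend_of_lt hZU h]
      exact ⟨hX t h, hY t h, hZ t h⟩
    · rw [stepAt_seqAppend_of_le h, stepAt_seqAppend_of_le h, stepAt_seqAppend_of_le h]
      obtain ⟨hU, hT, -⟩ := hUT (t - n) (by omega)
      exact ⟨hU, hT, hU⟩
  · rw [last, first, hUm]
  · rw [last, first, hTm]
  · rw [first, first, hZ0]
  · rw [last, first, hUm]
  · intro t ht
    rcases lt_or_ge t n with h | h
    · rw [stepAt_seqAppend_of_lt hYT h]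
      exact hXY t h
    · rw [stepAt_seqAppend_of_le h]
      exact (hUT (t - n) (by omega)).2.2
  · intro i _ j hj hXZ hZY
    by_contra! hij
    rcases lt_or_ge j n with hjn | hjn
    · rw [stepAt_seqAppend_of_lt hZU (hij.trans hjn)] at hXZ
      rw [stepAt_seqAppend_of_lt hYT hjn] at hZY
      exact hcross i j hjn ⟨hij, hXZ, hZY⟩
    · rw [stepAt_seqAppend_of_le hjn] at hZY
      exact (hUT (j - n) (by omega)).2.2 hZY

section Splice

variable {α : Type*}

def splice (i : ℕ) (X Y : ℕ → α) : ℕ → α := fun t => if t ≤ i then X t else Y t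

variable {i t : ℕ} {X Y : ℕ → α}

lemma splice_of_le (ht : t ≤ i) : splice i X Y t = X t := if_pos ht

lemma splice_of_lt (ht : i < t) : splice i X Y t = Y t := if_neg (not_le.2 ht)

end Splice

lemma ForwardWalk.mono {n m : ℕ} {X : ℕ → V} (h : ForwardWalk H n X) (hmn : m ≤ n) :
    ForwardWalk H m X :=
  fun t ht => h t (by omega)

lemma ForwardWalk.splice {n i : ℕ} {X Y : ℕ → V} (hX : ForwardWalk H n X)
    (hY : ForwardWalk H n Y) (hi : H (X i) (Y (i + 1))) : ForwardWalk H n (splice i X Y) := by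
  intro t ht
  rcases lt_trichotomy t i with h | rfl | h
  · rw [splice_of_le h.le, splice_of_le h]
    exact hX t ht
  · rwa [splice_of_le le_rfl, splice_of_lt (Nat.lt_succ_self t)]
  · rw [splice_of_lt h, splice_of_lt (by omega)]
    exact hY t ht

def IndependentWalks (H : V → V → Prop) (n : ℕ) (A B : ℕ → V) : Prop :=
  ∀ t < n, H (A t) (A (t + 1)) ∧ H (B t) (B (t + 1)) ∧
    ¬ H (A t) (B (t + 1)) ∧ ¬ H (B t) (A (t + 1))

namespace IndependentWalks

variable {n t : ℕ} {A B : ℕ → V}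

lemma symm (h : IndependentWalks H n A B) : IndependentWalks H n B A := fun t ht =>
  let ⟨hA, hB, hAB, hBA⟩ := h t ht
  ⟨hB, hA, hBA, hAB⟩

lemma forwardWalk_fst (h : IndependentWalks H n A B) : ForwardWalk H n A :=
  fun t ht => (h t ht).1

lemma forwardWalk_snd (h : IndependentWalks H n A B) : ForwardWalk H n B :=
  fun t ht => (h t ht).2.1

lemma forwardAvoids (h : IndependentWalks H n A B) : ForwardAvoids H n A B :=
  fun t ht => (h t ht).2.2.1

lemma ne (h : IndependentWalks H n A B) (ht : t < n) : A t ≠ B t := fun he =>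
  (h t ht).2.2.2 (he ▸ (h t ht).1)

lemma ne_succ (h : IndependentWalks H n A B) (ht : t < n) : A (t + 1) ≠ B (t + 1) := fun he =>
  (h t ht).2.2.1 (he ▸ (h t ht).1)

lemma pairArcD (h : IndependentWalks H n A B) (ht : t < n) :
    PairArcD H (A t, B t) (A (t + 1), B (t + 1)) :=
  ⟨h.ne ht, h.ne_succ ht, Or.inl ⟨(h t ht).1, (h t ht).2.1, (h t ht).2.2.1⟩⟩

lemma pairArcD_rev (h : IndependentWalks H n A B) (ht : t < n) :
    PairArcD H (A (t + 1), B (t + 1)) (A t, B t) :=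
  ⟨h.ne_succ ht, h.ne ht, Or.inr ⟨(h t ht).1, (h t ht).2.1, (h t ht).2.2.2⟩⟩

lemma pairReach_from_zero (h : IndependentWalks H n A B) :
    ∀ t ≤ n, PairReach H (A 0, B 0) (A t, B t)
  | 0, _ => Relation.ReflTransGen.refl
  | t + 1, ht => (h.pairReach_from_zero t (by omega)).tail (h.pairArcD ht)

lemma pairReach_to_zero (h : IndependentWalks H n A B) :
    ∀ t ≤ n, PairReach H (A t, B t) (A 0, B 0)
  | 0, _ => Relation.ReflTransGen.refl
  | t + 1, ht => .head (h.pairArcD_rev ht) (h.pairReach_to_zero t (by omega))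

lemma pairReach_of_exit {j : ℕ} {w : V} (h : IndependentWalks H n A B) (hj : j < n)
    (hw : H w (A (j + 1))) : PairReach H (A 0, B 0) (w, B j) :=
  (h.pairReach_from_zero (j + 1) hj).tail
    ⟨h.ne_succ hj, fun (he : w = B j) => (h j hj).2.2.2 (he ▸ hw),
      Or.inr ⟨hw, (h j hj).2.1, (h j hj).2.2.2⟩⟩

end IndependentWalks

lemma GoodOrd.pairReach_of_kAllowed {ord : V × V → ℕ} (hord : GoodOrd H ord) {p q : V × V}
    (hp : p.1 ≠ p.2) (hq : q.1 ≠ q.2) (hpq : KAllowed ord (ord p) q.1 q.2)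
    (h : PairReach H p q) : PairReach H q p := by
  by_contra hqp
  have hlt := hord.2.1 p q hp hq h hqp
  rcases hpq with he | ⟨hle, -⟩
  · exact hq he
  · rw [Prod.mk.eta] at hle
    omega

section Crossings

variable {n i j : ℕ} {A B Z : ℕ → V}

/-- Rerouting along `A` up to `i`, then `Z`, then `B` after `j` gives a walk from `A 0` to
`B n`, which must cross back from `B` to `A`; it can only do so inside `Z`. -/
theorem exists_isCrossing_swap (hH : ¬ CircularN H) (hAB : IndependentWalks H n A B)
    (hZ : ForwardWalk H n Z) (hj : j < n) (hc : IsCrossing H A Z B i j) :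
    ∃ s s', i ≤ s ∧ s' ≤ j ∧ IsCrossing H B Z A s s' := by
  obtain ⟨hij, hAZ, hZB⟩ := hc
  have hS : ForwardWalk H n (splice j (splice i A Z) B) :=
    (hAB.forwardWalk_fst.splice hZ hAZ).splice hAB.forwardWalk_snd
      (by rwa [splice_of_lt hij])
  obtain ⟨s, s', hs'n, hss', hin, hout⟩ := exists_isCrossing hH (by omega) hAB.forwardWalk_snd
    hAB.forwardWalk_fst hS (by rw [splice_of_le (Nat.zero_le j), splice_of_le (Nat.zero_le i)])
    (splice_of_lt hj) hAB.symm.forwardAvoids (hAB.symm.pairReach_to_zero n le_rfl)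
  have hs : i ≤ s := by
    by_contra! hs
    rw [splice_of_le (by omega), splice_of_le hs] at hin
    exact (hAB s (by omega)).2.2.2 hin
  have hs' : s' ≤ j := by
    by_contra! hs'
    rw [splice_of_lt hs'] at hout
    exact (hAB s' hs'n).2.2.2 hout
  refine ⟨s, s', hs, hs', hss', ?_, ?_⟩
  · rwa [splice_of_le (by omega), splice_of_lt (by omega)] at hin
  · rwa [splice_of_le hs', splice_of_lt (by omega)] at hout

/-- Otherwise `splice i A Z`, `B`, `splice i B Z` contradict `exists_isCrossing`. -/
theorem exists_exit_of_double_entry (hH : ¬ CircularN H) (hAB : IndependentWalks H n A B)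
    (hZ : ForwardWalk H n Z) (hij : i < j) (hjn : j ≤ n) (hA : H (A i) (Z (i + 1)))
    (hB : H (B i) (Z (i + 1))) (hret : PairReach H (Z j, B j) (A 0, B 0)) :
    ∃ t, i < t ∧ t < j ∧ H (Z t) (B (t + 1)) := by
  by_contra! hexit
  have havoid : ForwardAvoids H j (splice i A Z) B := by
    intro t ht
    rcases le_or_gt t i with h | h
    · rw [splice_of_le h]
      exact (hAB t (by omega)).2.2.1
    · rw [splice_of_lt h]
      exact hexit t h ht
  obtain ⟨s, s', hs'j, hss', hin, hout⟩ := exists_isCrossing hH (n := j) (by omega)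
    ((hAB.forwardWalk_fst.splice hZ hA).mono hjn) (hAB.forwardWalk_snd.mono hjn)
    ((hAB.forwardWalk_snd.splice hZ hB).mono hjn) (splice_of_le (Nat.zero_le i))
    (by rw [splice_of_lt hij, splice_of_lt hij]) havoid
    (by rwa [splice_of_lt hij, splice_of_le (Nat.zero_le i)])
  rcases lt_or_ge s i with hsi | hsi
  · rw [splice_of_le hsi.le, splice_of_le hsi] at hin
    exact (hAB s (by omega)).2.2.1 hin
  · rw [splice_of_lt (by omega)] at hout
    exact hexit s' (by omega) hs'j hout

/-- A narrowest crossing is crossed back at the same times, so `Z` is entered from both `A`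
and `B` at `i`; the exit towards `A` at `j` then yields a narrower crossing. -/
theorem not_isCrossing (hH : ¬ CircularN H) (hAB : IndependentWalks H n A B)
    (hZ : ForwardWalk H n Z)
    (hret : ∀ j < n, H (Z j) (A (j + 1)) → PairReach H (Z j, B j) (A 0, B 0)) (hj : j < n) :
    ¬ IsCrossing H A Z B i j ∧ ¬ IsCrossing H B Z A i j := by
  induction hw : j - i using Nat.strong_induction_on generalizing i j with
  | _ w ih =>
  have tight : ∀ s s', i ≤ s → s' ≤ j →
      (IsCrossing H A Z B s s' ∨ IsCrossing H B Z A s s') → s = i ∧ s' = j := by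
    intro s s' hs hs' hc
    have hss' : s < s' := hc.elim (·.1) (·.1)
    by_contra hne
    have hlt : s' - s < w := by omega
    rcases hc with hc | hc
    exacts [(ih _ hlt (by omega) rfl).1 hc, (ih _ hlt (by omega) rfl).2 hc]
  have hswap : IsCrossing H A Z B i j ↔ IsCrossing H B Z A i j := by
    constructor
    · intro hc
      obtain ⟨s, s', hs, hs', hc'⟩ := exists_isCrossing_swap hH hAB hZ hj hc
      obtain ⟨rfl, rfl⟩ := tight s s' hs hs' (.inr hc')
      exact hc'
    · intro hc
      obtain ⟨s, s', hs, hs', hc'⟩ := exists_isCrossing_swap hH hAB.symm hZ hj hc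
      obtain ⟨rfl, rfl⟩ := tight s s' hs hs' (.inl hc')
      exact hc'
  have hAZB : ¬ IsCrossing H A Z B i j := by
    intro hc
    obtain ⟨-, hB, hexit⟩ := hswap.1 hc
    obtain ⟨hij, hA, -⟩ := hc
    obtain ⟨t, hit, htj, hZB⟩ :=
      exists_exit_of_double_entry hH hAB hZ hij hj.le hA hB (hret j hj hexit)
    exact (ih (t - i) (by omega) (by omega) rfl).1 ⟨hit, hA, hZB⟩
  exact ⟨hAZB, hswap.not.1 hAZB⟩

theorem ne_last_of_kAllowed (hH : ¬ CircularN H) {ord : V × V → ℕ} (hord : GoodOrd H ord)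
    (hAB : IndependentWalks H n A B) (hne : A 0 ≠ B 0) (hZ : ForwardWalk H n Z)
    (hZ0 : Z 0 = A 0) (hal : ∀ t < n, KAllowed ord (ord (A 0, B 0)) (Z t) (B t)) :
    Z n ≠ B n := by
  intro hZn
  have hn : 0 < n := Nat.pos_of_ne_zero fun h => hne (hZ0.symm.trans (h ▸ hZn))
  have hret (j : ℕ) (hj : j < n) (hexit : H (Z j) (A (j + 1))) :
      PairReach H (Z j, B j) (A 0, B 0) :=
    hord.pairReach_of_kAllowed hne (fun (he : Z j = B j) => (hAB j hj).2.2.2 (he ▸ hexit))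
      (hal j hj) (hAB.pairReach_of_exit hj hexit)
  obtain ⟨i, j, hj, hc⟩ := exists_isCrossing hH hn hAB.forwardWalk_snd hAB.forwardWalk_fst hZ
    hZ0 hZn hAB.symm.forwardAvoids (hAB.symm.pairReach_to_zero n le_rfl)
  exact (not_isCrossing hH hAB hZ hret hj).2 hc

end Crossings

/-- Corollary 4.4 ("spravne"): reachability in `Tr(G,L)` constrains homomorphisms. -/
theorem statement7 (H : V → V → Prop) (hH : ¬ CircularN H)
    (G : W → W → Prop) (L : W → Set V)
    (ord : V × V → ℕ) (hord : GoodOrd H ord) (k : ℕ)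
    (a b : V) (hab : a ≠ b) (hk : ord (a, b) = k)
    (hgood : ∀ w, ∀ u ∈ L w, ∀ v ∈ L w, KAllowed ord k u v)
    (x x' : W) (a' b' : V)
    (hreach : Relation.ReflTransGen (TrArc H G L) (x, a, b) (x', a', b'))
    (f : W → V) (hf : IsLHom H G L f) (hfx : f x = a) :
    f x' ≠ b' := by
  intro hfx'
  obtain ⟨n, F, hF0, hFn, hF⟩ := Relation.ReflTransGen.exists_seq hreach
  subst hk
  refine ne_last_of_kAllowed (A := fun t => (F t).2.1) (B := fun t => (F t).2.2)
    (Z := fun t => f (F t).1) hH hord ?_ (by simpa [hF0] using hab)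
    (fun t ht => hf.1 _ _ (hF t ht).2.2.2.2.1) (by simp [hF0, hfx]) ?_ (by simp [hFn, hfx'])
  · intro t ht
    obtain ⟨-, -, -, -, -, hA, hB, hAB, hBA⟩ := hF t ht
    exact ⟨hA, hB, hAB, hBA⟩
  · intro t ht
    simpa [hF0] using hgood _ _ (hf.2 _) _ (hF t ht).2.1

end DigraphListHom
end

section
/- Let (x,y) and (x',y') be vertices of the pair digraph H⁺ of a digraph H with no circular N. If μ(x,y) = μ(x',y') and there is a directed walk from (x,y) to (x',y') in H⁺, then (x,y) and (x',y') lie in the same strong component of H⁺, and moreover all arcs of that walk are double. -/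
namespace DigraphListHom

variable {V W : Type*}

/-! Along an arc `p → q` of `H⁺`, `μ` stays constant if `q` reaches `p` back and increases
otherwise, so `μ` is monotone along a walk; equal values at the ends force every arc to be
reversible by a path. Closing such an arc `p → q` into a closed walk `p → q ⇝ p` gives two
congruent closed walks `X` (first coordinates) and `Y` (second coordinates) with `X` avoiding
`Y`; if the reverse arc `q → p` were missing, `y₀ x₁` would be a faithful edge and `X` with its
first vertex replaced by `y₀` would complete a circular `N`. -/

theorem reflTransGen_of_fin_chain {α : Type*} {r : α → α → Prop} {n : ℕ}
    (w : Fin (n + 1) → α) (hw : ∀ i : Fin n, r (w i.castSucc) (w i.succ)) :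
    Relation.ReflTransGen r (w 0) (w (Fin.last n)) := by
  induction (Fin.last n) using Fin.induction with
  | zero => exact .refl
  | succ i ih => exact ih.tail (hw i)

theorem exists_fin_chain_of_reflTransGen {α : Type*} {r : α → α → Prop} {a b : α}
    (h : Relation.ReflTransGen r a b) :
    ∃ (m : ℕ) (f : Fin (m + 1) → α), f 0 = a ∧ f (Fin.last m) = b ∧
      ∀ i : Fin m, r (f i.castSucc) (f i.succ) := by
  induction h using Relation.ReflTransGen.head_induction_on with
  | refl => exact ⟨0, fun _ => b, rfl, rfl, Fin.elim0⟩
  | head hac _ ih =>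
    obtain ⟨m, f, hf0, hfm, hf⟩ := ih
    refine ⟨m + 1, Fin.cons _ f, rfl, by simpa using hfm, Fin.cases ?_ fun i => ?_⟩
    · simpa [hf0] using hac
    · simpa using hf i

variable {H : V → V → Prop}

variable (H) in
theorem condChain_zero (p : V × V) : CondChain H p 0 :=
  ⟨Fin.elim0, fun i => i.elim0, fun i => i.elim0, fun i => i.elim0,
    fun h => (lt_irrefl 0 h).elim⟩

theorem CondChain.le_card [Fintype V] {p : V × V} {m : ℕ} (h : CondChain H p m) :
    m ≤ Fintype.card (V × V) := by
  obtain ⟨r, -, hr, -, -⟩ := h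
  have hinj : Function.Injective r := by
    intro i j hij
    by_contra hne
    rcases lt_or_gt_of_ne hne with hlt | hlt
    · exact (hr i j hlt).2 (hij ▸ .refl)
    · exact (hr j i hlt).2 (hij ▸ .refl)
  simpa using Fintype.card_le_of_injective r hinj

variable (H) in
theorem bddAbove_condChain [Fintype V] (p : V × V) : BddAbove {m | CondChain H p m} :=
  ⟨_, fun _ hm => CondChain.le_card hm⟩

variable (H) in
theorem condChain_mu [Fintype V] (p : V × V) : CondChain H p (mu H p) :=
  Nat.sSup_mem ⟨0, condChain_zero H p⟩ (bddAbove_condChain H p)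

theorem CondChain.of_sameSCC {p q : V × V} (hpq : SameSCC H p q) {m : ℕ}
    (h : CondChain H p m) : CondChain H q m := by
  obtain ⟨r, hr, hlt, hto, hfrom⟩ := h
  exact ⟨r, hr, hlt, fun i => (hto i).trans hpq.1, fun hm => hpq.2.trans (hfrom hm)⟩

theorem mu_eq_of_sameSCC {p q : V × V} (h : SameSCC H p q) : mu H p = mu H q :=
  congrArg sSup <| Set.ext fun _ => ⟨.of_sameSCC h, .of_sameSCC ⟨h.2, h.1⟩⟩

theorem CondChain.snoc {p q : V × V} {m : ℕ} (h : CondChain H p m) (hq : q.1 ≠ q.2)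
    (hpq : PairReach H p q) (hqp : ¬ PairReach H q p) : CondChain H q (m + 1) := by
  obtain ⟨r, hr, hlt, hto, -⟩ := h
  have hlast : (⟨m + 1 - 1, Nat.sub_lt m.succ_pos Nat.one_pos⟩ : Fin (m + 1)) = Fin.last m :=
    Fin.ext (Nat.add_sub_cancel m 1)
  refine ⟨Fin.snoc r q, fun i => ?_, fun i j hij => ?_, fun i => ?_, fun _ => ?_⟩
  · induction i using Fin.lastCases with
    | last => simpa using hq
    | cast i => simpa using hr i
  · induction j using Fin.lastCases with
    | last =>
      obtain ⟨i, rfl⟩ := Fin.exists_castSucc_eq.2 (Fin.ne_last_of_lt hij)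
      simp only [Fin.snoc_castSucc, Fin.snoc_last]
      exact ⟨(hto i).trans hpq, fun hqi => hqp (hqi.trans (hto i))⟩
    | cast j =>
      obtain ⟨i, rfl⟩ :=
        Fin.exists_castSucc_eq.2 (Fin.ne_last_of_lt (hij.trans (Fin.castSucc_lt_last j)))
      simpa using hlt i j (Fin.castSucc_lt_castSucc_iff.1 hij)
  · induction i using Fin.lastCases with
    | last => rw [Fin.snoc_last]; exact .refl
    | cast i => rw [Fin.snoc_castSucc]; exact (hto i).trans hpq
  · rw [hlast, Fin.snoc_last]; exact .refl

theorem mu_lt_of_pairReach [Fintype V] {p q : V × V} (hq : q.1 ≠ q.2)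
    (hpq : PairReach H p q) (hqp : ¬ PairReach H q p) : mu H p < mu H q :=
  le_csSup (bddAbove_condChain H q) ((condChain_mu H p).snoc hq hpq hqp)

theorem mu_le_of_pairArcD [Fintype V] {p q : V × V} (h : PairArcD H p q) : mu H p ≤ mu H q := by
  by_cases hqp : PairReach H q p
  · exact (mu_eq_of_sameSCC ⟨.single h, hqp⟩).le
  · exact (mu_lt_of_pairReach h.2.1 (.single h) hqp).le

theorem monotone_mu_comp [Fintype V] {n : ℕ} {w : Fin (n + 1) → V × V}
    (hw : ∀ i : Fin n, PairArcD H (w i.castSucc) (w i.succ)) : Monotone (mu H ∘ w) :=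
  Fin.monotone_iff_le_succ.2 fun i => mu_le_of_pairArcD (hw i)

theorem circularN_of_avoids {m : ℕ} {d : Fin (m + 1) → Bool} {x y : Fin (m + 2) → V}
    (hx : IsWalk H d x) (hy : IsWalk H d y) (hxc : x (Fin.last _) = x 0)
    (hyc : y (Fin.last _) = y 0) (hxy : Avoids H d x y) (hyx : FaithfulAt H d y x 0) :
    CircularN H := by
  have hz : ∀ i : Fin (m + 1), Function.update x 0 (y 0) i.succ = x i.succ := fun i =>
    Function.update_of_ne (Fin.succ_ne_zero i) _ _
  refine ⟨m + 1, m.succ_pos, d, x, y, Function.update x 0 (y 0), hx, hy, fun i => ?_, hxc, hyc,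
    Function.update_self .., ?_, hxy, fun i j _ hj => ?_⟩
  · rw [hz]
    rcases eq_or_ne i 0 with rfl | hi
    · simpa [FaithfulAt] using hyx
    · rw [Function.update_of_ne (Fin.castSucc_ne_zero_iff.2 hi)]
      exact hx i
  · rw [Function.update_of_ne (Fin.last_pos.ne' : Fin.last (m + 1) ≠ 0), hxc]
  · rcases eq_or_ne j 0 with rfl | hj0
    · exact Nat.zero_le _
    · refine absurd ?_ (hxy j)
      rwa [FaithfulAt, Function.update_of_ne (Fin.castSucc_ne_zero_iff.2 hj0)] at hj

theorem pairArc_iff_exists_step {p q : V × V} :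
    PairArc H p q ↔ ∃ dir, Step H p.1 q.1 dir ∧ Step H p.2 q.2 dir ∧ ¬ Step H p.1 q.2 dir := by
  constructor
  · rintro (h | h)
    exacts [⟨true, by simpa [Step] using h⟩, ⟨false, by simpa [Step] using h⟩]
  · rintro ⟨_ | _, h⟩
    exacts [.inr (by simpa [Step] using h), .inl (by simpa [Step] using h)]

theorem pairArc_one_zero_of_closed (hH : ¬ CircularN H) {m : ℕ} (g : Fin (m + 2) → V × V)
    (hg : ∀ i : Fin (m + 1), PairArc H (g i.castSucc) (g i.succ))
    (hc : g (Fin.last _) = g 0) : PairArc H (g 1) (g 0) := by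
  choose d hd using fun i => pairArc_iff_exists_step.1 (hg i)
  have hyx : ¬ Step H (g 0).2 (g 1).1 (d 0) := fun h =>
    hH <| circularN_of_avoids (x := fun j => (g j).1) (y := fun j => (g j).2)
      (fun i => (hd i).1) (fun i => (hd i).2.1) (congrArg Prod.fst hc) (congrArg Prod.snd hc)
      (fun i => (hd i).2.2) h
  obtain ⟨h1, h2, -⟩ := hd 0
  simp only [Fin.castSucc_zero, Fin.succ_zero_eq_one] at h1 h2
  cases hd0 : d 0 <;> simp only [hd0, Step, PairArc] at h1 h2 hyx ⊢ <;> simp_all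

theorem PairArcD.symm_of_pairReach (hH : ¬ CircularN H) {p q : V × V} (hpq : PairArcD H p q)
    (hqp : PairReach H q p) : PairArcD H q p := by
  obtain ⟨m, f, hf0, hfm, hf⟩ := exists_fin_chain_of_reflTransGen hqp
  refine ⟨hpq.2.1, hpq.1, ?_⟩
  have := pairArc_one_zero_of_closed hH (Fin.cons p f : Fin (m + 2) → V × V)
    (Fin.cases (by simpa [hf0] using hpq.2.2) fun i => by simpa using (hf i).2.2)
    (by simpa using hfm)
  simpa [hf0] using this

theorem statement12_general [Fintype V] (H : V → V → Prop) (hH : ¬ CircularN H)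
    {n : ℕ} (w : Fin (n + 1) → V × V)
    (hw : ∀ i : Fin n, PairArcD H (w i.castSucc) (w i.succ))
    (hmu : mu H (w 0) = mu H (w (Fin.last n))) :
    SameSCC H (w 0) (w (Fin.last n)) ∧
      ∀ i : Fin n, PairArcD H (w i.succ) (w i.castSucc) := by
  have hdouble : ∀ i : Fin n, PairArcD H (w i.succ) (w i.castSucc) := fun i => by
    refine (hw i).symm_of_pairReach hH (by_contra fun hback => ?_)
    have hlt := mu_lt_of_pairReach (hw i).2.1 (.single (hw i)) hback
    have h0 := monotone_mu_comp hw (Fin.zero_le i.castSucc)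
    have hlast := monotone_mu_comp hw (Fin.le_last i.succ)
    simp only [Function.comp_apply] at h0 hlast
    omega
  refine ⟨⟨reflTransGen_of_fin_chain w hw, ?_⟩, hdouble⟩
  exact Relation.reflTransGen_swap.1 (reflTransGen_of_fin_chain w hdouble)

/-- equal `μ` plus reachability forces the same strong component,
and all arcs of the walk are double. -/
theorem statement12 [Fintype V] (H : V → V → Prop) (hH : ¬ CircularN H)
    {n : ℕ} (w : Fin (n + 1) → V × V)
    (hw : ∀ i : Fin n, PairArcD H (w i.castSucc) (w i.succ))
    (hv : (w 0).1 ≠ (w 0).2)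
    (hmu : mu H (w 0) = mu H (w (Fin.last n))) :
    SameSCC H (w 0) (w (Fin.last n)) ∧
      ∀ i : Fin n, PairArcD H (w i.succ) (w i.castSucc) :=
  statement12_general H hH w hw hmu

end DigraphListHom
end
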